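/- For m+1 ≤ i ≤ m+n−1, the isomorphism ρ_{n|m} ∘ ω_{n|m} : Y(gl_{n|m}) → Y(gl_{m|n}) satisfies (ρ_{n|m} ∘ ω_{n|m})(f_{m+n−i}(v)) = −e_i(v) and (ρ_{n|m} ∘ ω_{n|m})(e_{m+n−i}(v)) = −f_i(v), where the e's and f's on the left are the Gauss-decomposition series of Y(gl_{n|m}) and those on the right are the Gauss-decomposition series of Y(gl_{m|n}). -/

import Mathlib

/-!
Common setup: the super Yangian `Y(gl_{m|n})`, defined as the quotient of the free
algebra on generators `t_{ij}^{(r)}` (here `(i, j, r) : Fin (m+n) × Fin (m+n) × ℕ`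
encodes `t_{ij}^{(r+1)}`) by the defining relations, obtained by equating the
coefficients of `u^{-r} v^{-s}` in
`(u-v)[t_{ij}(u), t_{kl}(v)]
   = (-1)^{ī j̄ + ī k̄ + j̄ k̄} (t_{kj}(u) t_{il}(v) - t_{kj}(v) t_{il}(u))`.
Power series in `u^{-1}` are modelled by `PowerSeries`, whose variable stands
for `u^{-1}`.
-/

noncomputable section

namespace SuperYangian

open scoped BigOperators

/-- Generator index: `(i, j, r)` encodes the generator `t_{ij}^{(r+1)}`. -/
abbrev Gen (N : ℕ) := Fin N × Fin N × ℕ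

/-- The free algebra on the generators. -/
abbrev FA (N : ℕ) := FreeAlgebra ℂ (Gen N)

/-- Parity of an index: `0` for the first `m` indices, `1` for the remaining ones. -/
def par (m : ℕ) {N : ℕ} (i : Fin N) : ℕ := if (i : ℕ) < m then 0 else 1

/-- The sign `(-1)^{ī j̄ + ī k̄ + j̄ k̄}`. -/
def sgn3 (m : ℕ) {N : ℕ} (i j k : Fin N) : ℤ :=
  (-1) ^ (par m i * par m j + par m i * par m k + par m j * par m k)

/-- The series `t_{ij}(u) = δ_{ij} + Σ_{r ≥ 1} t_{ij}^{(r)} u^{-r}` over the free algebra. -/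
def tF {N : ℕ} (i j : Fin N) : PowerSeries (FA N) :=
  PowerSeries.mk fun r =>
    if r = 0 then (if i = j then 1 else 0) else FreeAlgebra.ι ℂ (i, j, r - 1)

/-- The element of the free algebra expressing, at bidegree `u^{-r} v^{-s}`, the defining
relation `(u-v)[t_{ij}(u), t_{kl}(v)]
  = (-1)^{ī j̄ + ī k̄ + j̄ k̄}(t_{kj}(u) t_{il}(v) - t_{kj}(v) t_{il}(u))`. -/
def relElt (m : ℕ) {N : ℕ} (i j k l : Fin N) (r s : ℕ) : FA N :=
  ((PowerSeries.coeff (r+1) (tF i j)) * (PowerSeries.coeff s (tF k l))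
      - (PowerSeries.coeff s (tF k l)) * (PowerSeries.coeff (r+1) (tF i j)))
  - ((PowerSeries.coeff r (tF i j)) * (PowerSeries.coeff (s+1) (tF k l))
      - (PowerSeries.coeff (s+1) (tF k l)) * (PowerSeries.coeff r (tF i j)))
  - sgn3 m i j k •
      ((PowerSeries.coeff r (tF k j)) * (PowerSeries.coeff s (tF i l))
        - (PowerSeries.coeff s (tF k j)) * (PowerSeries.coeff r (tF i l)))

/-- The defining relations of `Y(gl_{m|n})`. -/
inductive YRel (m n : ℕ) : FA (m+n) → FA (m+n) → Prop
  | rel (i j k l : Fin (m+n)) (r s : ℕ) : YRel m n (relElt m i j k l r s) 0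

/-- The super Yangian `Y(gl_{m|n})`. -/
abbrev Yangian (m n : ℕ) := RingQuot (YRel m n)

/-- The canonical projection from the free algebra onto the Yangian. -/
def proj (m n : ℕ) : FA (m+n) →ₐ[ℂ] Yangian m n := RingQuot.mkAlgHom ℂ (YRel m n)

/-- The generator `t_{ij}^{(r+1)}` of `Y(gl_{m|n})` (`tGen i j r` is `t_{ij}^{(r+1)}`,
so that as `r` ranges over `ℕ` we get exactly the generators `t_{ij}^{(s)}`, `s ≥ 1`). -/
def tGen {m n : ℕ} (i j : Fin (m+n)) (r : ℕ) : Yangian m n :=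
  proj m n (FreeAlgebra.ι ℂ (i, j, r))

/-- The generating series `t_{ij}(u) ∈ Y(gl_{m|n})[[u^{-1}]]`. -/
def t {m n : ℕ} (i j : Fin (m+n)) : PowerSeries (Yangian m n) :=
  PowerSeries.mk fun r => if r = 0 then (if i = j then 1 else 0) else tGen i j (r - 1)

/-- The matrix `T(u)`. -/
def T (m n : ℕ) : Matrix (Fin (m+n)) (Fin (m+n)) (PowerSeries (Yangian m n)) :=
  Matrix.of fun i j => t i j

/-- The inverse matrix `T(u)^{-1}` (`T(u)` is a unit of the matrix ring, since its
constant term is the identity matrix, so `Ring.inverse` produces the genuine inverse). -/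
def T' (m n : ℕ) : Matrix (Fin (m+n)) (Fin (m+n)) (PowerSeries (Yangian m n)) :=
  Ring.inverse (T m n)

/-- The series `t'_{ij}(u)`: the `(i,j)` entry of `T(u)^{-1}`. -/
def t' {m n : ℕ} (i j : Fin (m+n)) : PowerSeries (Yangian m n) := T' m n i j

/-- `g(u - c)`: substitute `u - c` for `u` and expand in powers of `u^{-1}`, using
`(u-c)^{-r} = Σ_{s ≥ 0} C(r+s-1, s) c^s u^{-r-s}`. -/
def shift {A : Type*} [Ring A] (c : ℤ) (g : PowerSeries A) : PowerSeries A :=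
  PowerSeries.mk fun p => ∑ r ∈ Finset.range (p+1),
    (((p-1).choose (p-r) : ℤ) * c ^ (p-r)) • PowerSeries.coeff (R := A) r g

/-- `g(-u)`: replace `u^{-r}` by `(-1)^r u^{-r}`. -/
def negu {A : Type*} [Ring A] (g : PowerSeries A) : PowerSeries A :=
  PowerSeries.mk fun p => ((-1 : ℤ) ^ p) • PowerSeries.coeff (R := A) p g

/-- The quantum determinant type series
`C_m(u) = Σ_{τ ∈ S_m} sgn τ · t_{τ(1)1}(u) t_{τ(2)2}(u-1) ⋯ t_{τ(m)m}(u-m+1)`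
of the `gl_m` block of `Y(gl_{m|n})`. -/
def Cm (m n : ℕ) : PowerSeries (Yangian m n) :=
  ∑ τ : Equiv.Perm (Fin m), (Equiv.Perm.sign τ : ℤ) •
    ((List.finRange m).map fun (a : Fin m) =>
      shift ((a : ℕ) : ℤ)
        (t (Fin.castLE (Nat.le_add_right m n) (τ a))
           (Fin.castLE (Nat.le_add_right m n) a))).prod

/-- The second factor of the quantum Berezinian:
`Σ_{σ ∈ S_n} sgn σ · t'_{m+1, m+σ(1)}(u-m+1) ⋯ t'_{m+n, m+σ(n)}(u-m+n)`. -/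
def berSecond (m n : ℕ) : PowerSeries (Yangian m n) :=
  ∑ σ : Equiv.Perm (Fin n), (Equiv.Perm.sign σ : ℤ) •
    ((List.finRange n).map fun (b : Fin n) =>
      shift ((m : ℤ) - 1 - (b : ℕ))
        (t' (Fin.natAdd m b) (Fin.natAdd m (σ b)))).prod

/-- The quantum Berezinian `b_{m|n}(u)`. -/
def ber (m n : ℕ) : PowerSeries (Yangian m n) := Cm m n * berSecond m n

/-- Gauss decomposition data: `D` is diagonal (with invertible diagonal entries, i.e.
constant term `1`), `E` upper unitriangular, `F` lower unitriangular, and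
`T(u) = F(u) D(u) E(u)`. -/
def IsGauss (m n : ℕ)
    (F D E : Matrix (Fin (m+n)) (Fin (m+n)) (PowerSeries (Yangian m n))) : Prop :=
  (∀ i j, i ≠ j → D i j = 0) ∧
  (∀ i, PowerSeries.constantCoeff (D i i) = 1) ∧
  (∀ i, E i i = 1) ∧ (∀ i j : Fin (m+n), (j : ℕ) < (i : ℕ) → E i j = 0) ∧
  (∀ i, F i i = 1) ∧ (∀ i j : Fin (m+n), (i : ℕ) < (j : ℕ) → F i j = 0) ∧
  T m n = F * D * E

/-- The top-left `(i+1) × (i+1)` submatrix of `T(u)` (`0`-indexed `i`). -/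
def subT (m n : ℕ) (i : Fin (m+n)) :
    Matrix (Fin ((i : ℕ)+1)) (Fin ((i : ℕ)+1)) (PowerSeries (Yangian m n)) :=
  Matrix.of fun a b => t (Fin.castLE i.isLt a) (Fin.castLE i.isLt b)

/-- The quasideterminant `d_{i+1}(u)` (`0`-indexed: `dQ m n i` is the `(i+1, i+1)`
quasideterminant of the top-left `(i+1) × (i+1)` submatrix of `T(u)`). -/
def dQ (m n : ℕ) (i : Fin (m+n)) : PowerSeries (Yangian m n) :=
  Ring.inverse (Ring.inverse (subT m n i) (Fin.last (i : ℕ)) (Fin.last (i : ℕ)))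

/-- Formal series in the two variables `u^{-1}`, `v^{-1}` (variable `0` is `u^{-1}`,
variable `1` is `v^{-1}`). -/
abbrev Bi (A : Type*) := MvPowerSeries (Fin 2) A

/-- Embed a series in `u^{-1}` into the two-variable series ring. -/
def inU {A : Type*} [Semiring A] (g : PowerSeries A) : Bi A :=
  fun d => if d 1 = 0 then PowerSeries.coeff (R := A) (d 0) g else 0

/-- Embed a series in `v^{-1}` into the two-variable series ring. -/
def inV {A : Type*} [Semiring A] (g : PowerSeries A) : Bi A :=
  fun d => if d 0 = 0 then PowerSeries.coeff (R := A) (d 1) g else 0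

/-- The coefficient of `u^{-r} v^{-s}`. -/
def bc {A : Type*} [Semiring A] (r s : ℕ) (g : Bi A) : A :=
  MvPowerSeries.coeff (R := A) (Finsupp.single 0 r + Finsupp.single 1 s) g

/-- The characterizing property of the automorphism `ω_{m|n}`:
`ω(t_{ij}(u)) = t'_{ij}(-u)`, i.e. `T(u) ↦ T(-u)^{-1}` coefficientwise. -/
def omegaProp (m n : ℕ) (ω : Yangian m n →ₐ[ℂ] Yangian m n) : Prop :=
  ∀ i j : Fin (m+n), PowerSeries.map ω.toRingHom (t i j) = negu (t' i j)

/-- The index map `i ↦ m+n+1-i` (in `1`-based labelling) from the indices of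
`Y(gl_{m|n})` to those of `Y(gl_{n|m})`. -/
def flipIdx {m n : ℕ} (i : Fin (m+n)) : Fin (n+m) :=
  ⟨m + n - 1 - (i : ℕ), by have := i.isLt; omega⟩

/-- The characterizing property of the isomorphism `ρ_{m|n} : Y(gl_{m|n}) → Y(gl_{n|m})`:
`ρ(t_{ij}(u)) = t_{m+n+1-i, m+n+1-j}(-u)`. -/
def rhoProp (m n : ℕ) (ρ : Yangian m n →ₐ[ℂ] Yangian n m) : Prop :=
  ∀ i j : Fin (m+n), PowerSeries.map ρ.toRingHom (t i j) = negu (t (flipIdx i) (flipIdx j))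

/-- The index map `i ↦ k + i` from indices of `Y(gl_{m|n})` to indices of
`Y(gl_{m+k|n})` (whose total size `M + n` is recorded via `M = m + k`). -/
def addIdx {m n : ℕ} (k M : ℕ) (hM : M = m + k) (i : Fin (m+n)) : Fin (M+n) :=
  ⟨k + (i : ℕ), by have := i.isLt; omega⟩

/-- The characterizing property of the inclusion `φ_{m|n} : Y(gl_{m|n}) → Y(gl_{m+k|n})`:
`t_{ij}^{(r)} ↦ t_{k+i, k+j}^{(r)}`. -/
def phiProp (m n k M : ℕ) (hM : M = m + k) (φ : Yangian m n →ₐ[ℂ] Yangian M n) : Prop :=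
  ∀ i j : Fin (m+n),
    PowerSeries.map φ.toRingHom (t i j) = t (addIdx k M hM i) (addIdx k M hM j)

/-- The `(k+1, k+1)` quasideterminant of a `(k+1) × (k+1)` matrix. -/
def qdet {R : Type*} [Ring R] {k : ℕ} (X : Matrix (Fin (k+1)) (Fin (k+1)) R) : R :=
  Ring.inverse (Ring.inverse X (Fin.last k) (Fin.last k))

end SuperYangian

/-!
`ω` sends `T(u)` to `T(-u)^{-1}` and `ρ` sends `T(u)` to `T(-u)` with its indices reversed, so the
two sign changes cancel and `ρ ∘ ω` sends `T(u)` of `Y(gl_{n|m})` to the index-reversed `T(u)^{-1}`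
of `Y(gl_{m|n})`. Inverting `T = F D E` gives `T^{-1} = E^{-1} D^{-1} F^{-1}`, and reversing the
indices makes `E^{-1}` lower and `F^{-1}` upper unitriangular. By uniqueness of the Gauss
decomposition, `ρ ∘ ω` maps `F` and `E` to the reversed `E^{-1}` and `F^{-1}`, and the entries of
the inverse of a unitriangular matrix next to the diagonal are the negated ones of the matrix.
-/

namespace Matrix

open Function OrderDual

section Triangular

variable {ι κ α β R : Type*} [LinearOrder α] [Ring R] {b : ι → α} {M N D : Matrix ι ι R}

variable (b) in
def IsUnitriangular (M : Matrix ι ι R) : Prop := M.BlockTriangular b ∧ ∀ i, M i i = 1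

theorem IsUnitriangular.submatrix [LinearOrder β] {b' : κ → β} {e : κ → ι}
    (hM : M.IsUnitriangular b) (he : ∀ ⦃i j⦄, b' j < b' i → b (e j) < b (e i)) :
    (M.submatrix e e).IsUnitriangular b' :=
  ⟨fun _ _ h => hM.1 (he h), fun i => hM.2 (e i)⟩

theorem IsDiag.blockTriangular (hD : D.IsDiag) (b : ι → α) : D.BlockTriangular b :=
  fun _ _ h => hD fun e => h.ne (congrArg b e).symm

theorem eq_one_of_isUpperTriangular_of_isLowerTriangular [DecidableEq ι] [LinearOrder ι]
    (hU : M.IsUpperTriangular) (hL : M.IsLowerTriangular) (h1 : ∀ i, M i i = 1) : M = 1 := by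
  ext i j
  rcases lt_trichotomy i j with h | rfl | h
  · rw [hL h, one_apply_ne h.ne]
  · rw [h1, one_apply_eq]
  · rw [hU h, one_apply_ne h.ne']

variable [Fintype ι]

theorem BlockTriangular.mul_apply_self (hb : Injective b) (hM : M.BlockTriangular b)
    (hN : N.BlockTriangular b) (i : ι) : (M * N) i i = M i i * N i i :=
  Fintype.sum_eq_single i fun k hk => by
    rcases lt_or_gt_of_ne (hb.ne hk) with h | h
    · exact mul_eq_zero_of_left (hM h) _
    · exact mul_eq_zero_of_right _ (hN h)

theorem IsUnitriangular.mul (hb : Injective b) (hM : M.IsUnitriangular b)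
    (hN : N.IsUnitriangular b) : (M * N).IsUnitriangular b :=
  ⟨hM.1.mul hN.1, fun i => by rw [hM.1.mul_apply_self hb hN.1, hM.2, hN.2, one_mul]⟩

variable [DecidableEq ι]

theorem isNilpotent_of_apply_eq_zero_of_le (hN : ∀ ⦃i j⦄, b j ≤ b i → N i j = 0) :
    IsNilpotent N := by
  -- each factor of `N` strictly raises `height`, which is bounded by `card ι`
  let height : ι → ℕ := fun l => (Finset.univ.filter fun l' => b l' < b l).card
  have height_lt {k l : ι} (hkl : b k < b l) : height k < height l :=
    Finset.card_lt_card <| (Finset.ssubset_iff_of_subset fun x hx => by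
      simp only [Finset.mem_filter] at hx ⊢; exact ⟨hx.1, hx.2.trans hkl⟩).2
      ⟨k, by simp [hkl]⟩
  have pow_apply : ∀ k i j, height j < height i + k → (N ^ k) i j = 0 := by
    intro k
    induction k with
    | zero => exact fun i j hij => one_apply_ne fun h => by subst h; omega
    | succ k ih =>
      intro i j hij
      rw [pow_succ, mul_apply]
      refine Finset.sum_eq_zero fun l _ => ?_
      by_cases hl : height l < height i + k
      · rw [ih i l hl, zero_mul]
      · exact mul_eq_zero_of_right _ (hN (not_lt.1 fun h => by have := height_lt h; omega))
  refine ⟨Fintype.card ι, ext fun i j => pow_apply _ i j ?_⟩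
  have : height j < Fintype.card ι :=
    Finset.card_lt_univ_of_notMem (x := j) (by simp)
  omega

theorem IsUnitriangular.isUnit_and_ringInverse (hb : Injective b) (hM : M.IsUnitriangular b) :
    IsUnit M ∧ (Ring.inverse M).BlockTriangular b := by
  -- `M = 1 + X` with `X` nilpotent in the subalgebra of `b`-triangular matrices
  let S := blockTriangularSubalgebra ℤ R b
  let X : S := ⟨M - 1, hM.1.sub blockTriangular_one⟩
  have hX : IsNilpotent X := by
    obtain ⟨k, hk⟩ := isNilpotent_of_apply_eq_zero_of_le (b := b) (N := M - 1) fun i j hij => by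
      rcases hij.lt_or_eq with h | h
      · rw [sub_apply, hM.1 h, one_apply_ne fun e => h.ne (congrArg b e).symm, sub_zero]
      · rw [hb h, sub_apply, hM.2, one_apply_eq, sub_self]
    exact ⟨k, Subtype.ext hk⟩
  obtain ⟨u, hu⟩ := hX.isUnit_one_add
  have hMu : ((u : S) : Matrix ι ι R) = M := by rw [hu]; exact add_sub_cancel 1 M
  let v : (Matrix ι ι R)ˣ := Units.map S.val.toMonoidHom u
  have hv : (v : Matrix ι ι R) = M := hMu
  refine ⟨hv ▸ v.isUnit, ?_⟩
  rw [← hv, Ring.inverse_unit]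
  exact ((u⁻¹ : Sˣ) : S).prop

theorem IsUnitriangular.isUnit (hb : Injective b) (hM : M.IsUnitriangular b) : IsUnit M :=
  (hM.isUnit_and_ringInverse hb).1

theorem IsUnitriangular.ringInverse (hb : Injective b) (hM : M.IsUnitriangular b) :
    (Ring.inverse M).IsUnitriangular b := by
  obtain ⟨hu, hinv⟩ := hM.isUnit_and_ringInverse hb
  refine ⟨hinv, fun i => ?_⟩
  have := congrFun (congrFun (Ring.mul_inverse_cancel M hu) i) i
  rwa [hM.1.mul_apply_self hb hinv, hM.2, one_mul, one_apply_eq] at this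

theorem IsUnitriangular.ringInverse_apply_of_covBy (hb : Injective b)
    (hM : M.IsUnitriangular b) {c d : ι} (hcd : b c ⋖ b d) :
    Ring.inverse M c d = -M c d := by
  have hV := hM.ringInverse hb
  have hcd' : c ≠ d := fun h => hcd.lt.ne (h ▸ rfl)
  have h := congrFun (congrFun (Ring.mul_inverse_cancel M (hM.isUnit hb)) c) d
  rw [one_apply_ne hcd', mul_apply, Fintype.sum_eq_add c d hcd' fun k ⟨hkc, hkd⟩ => ?_,
    hM.2, hV.2, one_mul, mul_one] at h
  · exact eq_neg_of_add_eq_zero_left h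
  rcases lt_or_ge (b k) (b c) with hk | hk
  · rw [hM.1 hk, zero_mul]
  rcases lt_or_ge (b d) (b k) with hk' | hk'
  · rw [hV.1 hk', mul_zero]
  rcases hcd.eq_or_eq hk hk' with h | h
  exacts [absurd (hb h) hkc, absurd (hb h) hkd]

theorem IsDiag.ringInverse (hD : D.IsDiag) (hu : IsUnit D) : (Ring.inverse D).IsDiag := by
  obtain ⟨d, rfl⟩ : ∃ d, D = diagonal d := ⟨_, hD.diagonal_diag.symm⟩
  intro i j hij
  have hl := congrFun (congrFun (Ring.inverse_mul_cancel (diagonal d) hu) i) i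
  have hr := congrFun (congrFun (Ring.mul_inverse_cancel (diagonal d) hu) i) j
  rw [mul_diagonal, one_apply_eq] at hl
  rw [diagonal_mul, one_apply_ne hij] at hr
  calc Ring.inverse (diagonal d) i j
      = Ring.inverse (diagonal d) i i * d i * Ring.inverse (diagonal d) i j := by rw [hl, one_mul]
    _ = 0 := by rw [mul_assoc, hr, mul_zero]

end Triangular

section LDU

variable {ι κ R : Type*} [Fintype ι] [DecidableEq ι] [LinearOrder ι] [Ring R]
  {L D U L' D' U' : Matrix ι ι R}

structure IsLDU (L D U : Matrix ι ι R) : Prop where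
  lower : L.IsUnitriangular toDual
  isDiag : D.IsDiag
  isUnit : IsUnit D
  upper : U.IsUnitriangular id

theorem eq_one_of_lower_mul_diag_eq_diag_mul_upper (hL : L.IsUnitriangular toDual)
    (hU : U.IsUnitriangular id) (hD : D.IsDiag) (hDu : IsUnit D) (hD' : D'.IsDiag)
    (hD'u : IsUnit D') (h : L * D = D' * U) : L = 1 ∧ U = 1 := by
  have hL_eq : L = D' * U * Ring.inverse D := by
    rw [← h, mul_assoc, Ring.mul_inverse_cancel D hDu, mul_one]
  have hL1 : L = 1 := eq_one_of_isUpperTriangular_of_isLowerTriangular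
    (hL_eq ▸ ((hD'.blockTriangular id).mul hU.1).mul ((hD.ringInverse hDu).blockTriangular id))
    hL.1 hL.2
  have hU_eq : U = Ring.inverse D' * D := by
    rw [← one_mul D, ← hL1, h, ← mul_assoc, Ring.inverse_mul_cancel D' hD'u, one_mul]
  refine ⟨hL1, eq_one_of_isUpperTriangular_of_isLowerTriangular hU.1
    (hU_eq ▸ ((hD'.ringInverse hD'u).blockTriangular toDual).mul (hD.blockTriangular toDual))
    hU.2⟩

theorem IsLDU.unique (h : IsLDU L D U) (h' : IsLDU L' D' U')
    (heq : L * D * U = L' * D' * U') : L = L' ∧ U = U' := by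
  have hL' := h'.lower.isUnit toDual.injective
  have hU := h.upper.isUnit injective_id
  have key : (Ring.inverse L' * L) * D = D' * (U' * Ring.inverse U) := by
    calc Ring.inverse L' * L * D = Ring.inverse L' * (L * D * U) * Ring.inverse U := by
          simp only [← mul_assoc, Ring.mul_inverse_cancel_right _ _ hU]
      _ = D' * (U' * Ring.inverse U) := by
          simp only [heq, mul_assoc, Ring.inverse_mul_cancel_left _ _ hL']
  obtain ⟨hL1, hU1⟩ := eq_one_of_lower_mul_diag_eq_diag_mul_upper
    ((h'.lower.ringInverse toDual.injective).mul toDual.injective h.lower)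
    (h'.upper.mul injective_id (h.upper.ringInverse injective_id))
    h.isDiag h.isUnit h'.isDiag h'.isUnit key
  constructor
  · rw [← Ring.mul_inverse_cancel_left L' L hL', hL1, mul_one]
  · rw [← Ring.inverse_mul_cancel_right U U' hU, hU1, one_mul]

theorem IsLDU.isUnit_mul (h : IsLDU L D U) : IsUnit (L * D * U) :=
  ((h.lower.isUnit toDual.injective).mul h.isUnit).mul (h.upper.isUnit injective_id)

theorem IsLDU.ringInverse_mul (h : IsLDU L D U) :
    Ring.inverse (L * D * U) = Ring.inverse U * Ring.inverse D * Ring.inverse L := by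
  rw [Ring.inverse_mul (.inr (h.upper.isUnit injective_id)), Ring.inverse_mul (.inr h.isUnit),
    mul_assoc]

theorem IsLDU.map {S : Type*} [Ring S] (f : R →+* S) (h : IsLDU L D U) :
    IsLDU (f.mapMatrix L) (f.mapMatrix D) (f.mapMatrix U) where
  lower := ⟨h.lower.1.map f, fun i => by simp [h.lower.2 i]⟩
  isDiag := h.isDiag.map (map_zero f)
  isUnit := h.isUnit.map f.mapMatrix
  upper := ⟨h.upper.1.map f, fun i => by simp [h.upper.2 i]⟩

theorem IsLDU.ringInverse_submatrix [Fintype κ] [DecidableEq κ] [LinearOrder κ] {e : κ ≃ ι}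
    (he : StrictAnti e) (h : IsLDU L D U) :
    IsLDU ((Ring.inverse U).submatrix e e) ((Ring.inverse D).submatrix e e)
      ((Ring.inverse L).submatrix e e) where
  lower := (h.upper.ringInverse injective_id).submatrix fun _ _ hij => he hij
  isDiag := (h.isDiag.ringInverse h.isUnit).submatrix e.injective
  isUnit := h.isUnit.ringInverse.map (reindexRingEquiv R e.symm)
  upper := (h.lower.ringInverse toDual.injective).submatrix fun _ _ hij => he hij

end LDU

end Matrix

theorem map_ringInverse {M₀ N₀ F : Type*} [MonoidWithZero M₀] [MonoidWithZero N₀]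
    [FunLike F M₀ N₀] [MonoidHomClass F M₀ N₀] (f : F) {x : M₀} (hx : IsUnit x) :
    f (Ring.inverse x) = Ring.inverse (f x) := by
  obtain ⟨u, rfl⟩ := hx
  rw [Ring.inverse_unit]
  exact (Ring.inverse_unit (Units.map (f : M₀ →* N₀) u)).symm

namespace SuperYangian

section Negu

variable {A B : Type*} [Ring A] [Ring B]

theorem coeff_negu (g : PowerSeries A) (p : ℕ) :
    PowerSeries.coeff p (negu g) = ((-1 : ℤ) ^ p) • PowerSeries.coeff p g :=
  PowerSeries.coeff_mk _ _

theorem negu_negu (g : PowerSeries A) : negu (negu g) = g := by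
  ext p
  rw [coeff_negu, coeff_negu, smul_smul, ← mul_pow]
  simp

theorem map_negu (f : A →+* B) (g : PowerSeries A) :
    PowerSeries.map f (negu g) = negu (PowerSeries.map f g) := by
  ext p
  rw [PowerSeries.coeff_map, coeff_negu, coeff_negu, PowerSeries.coeff_map, map_zsmul]

variable (A) in
def neguRingHom : PowerSeries A →+* PowerSeries A where
  toFun := negu
  map_one' := by
    ext p
    rcases eq_or_ne p 0 with rfl | hp <;> simp [coeff_negu, PowerSeries.coeff_one, *]
  map_mul' f g := by
    ext p
    simp only [coeff_negu, PowerSeries.coeff_mul, Finset.smul_sum]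
    refine Finset.sum_congr rfl fun x hx => ?_
    rw [smul_mul_smul_comm, ← pow_add, Finset.HasAntidiagonal.mem_antidiagonal.1 hx]
  map_zero' := by ext p; simp [coeff_negu]
  map_add' f g := by ext p; simp [coeff_negu]

end Negu

def flipEquiv (m n : ℕ) : Fin (m+n) ≃ Fin (n+m) where
  toFun := flipIdx
  invFun := flipIdx
  left_inv i := Fin.ext (by have := i.isLt; simp only [flipIdx]; omega)
  right_inv i := Fin.ext (by have := i.isLt; simp only [flipIdx]; omega)

theorem val_flipEquiv {m n : ℕ} (i : Fin (m+n)) : (flipEquiv m n i : ℕ) = m + n - 1 - i := rfl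

theorem strictAnti_flipEquiv (m n : ℕ) : StrictAnti (flipEquiv m n) := fun i j hij => by
  have := j.isLt
  simp only [flipEquiv, Equiv.coe_fn_mk, flipIdx, Fin.lt_def] at hij ⊢
  omega

theorem IsGauss.isLDU {m n : ℕ}
    {F D E : Matrix (Fin (m+n)) (Fin (m+n)) (PowerSeries (Yangian m n))}
    (h : IsGauss m n F D E) : Matrix.IsLDU F D E := by
  obtain ⟨hD, hD₀, hE₁, hE, hF₁, hF, -⟩ := h
  refine ⟨⟨fun i j hij => hF i j hij, hF₁⟩, hD, ?_, ⟨fun i j hij => hE i j hij, hE₁⟩⟩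
  rw [← Matrix.IsDiag.diagonal_diag (A := D) hD]
  exact (Pi.isUnit_iff.2 fun i => PowerSeries.isUnit_iff_constantCoeff.2
    (by rw [Matrix.diag_apply, hD₀ i]; exact isUnit_one)).map (Matrix.diagonalRingHom _ _)

theorem mapMatrix_rho_comp_omega_T {m n : ℕ} {ω : Yangian n m →ₐ[ℂ] Yangian n m}
    (hω : omegaProp n m ω) {ρ : Yangian n m →ₐ[ℂ] Yangian m n} (hρ : rhoProp n m ρ)
    (h₁ : IsUnit (T n m)) (h₂ : IsUnit (T m n)) :
    (PowerSeries.map (ρ.comp ω).toRingHom).mapMatrix (T n m)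
      = (Ring.inverse (T m n)).submatrix (flipEquiv n m) (flipEquiv n m) := by
  let N := (neguRingHom (Yangian m n)).mapMatrix (m := Fin (n+m))
  let e := Matrix.reindexRingEquiv (PowerSeries (Yangian m n)) (flipEquiv n m).symm
  have hNN (X) : N (N X) = X := Matrix.ext fun i j => negu_negu (X i j)
  have hρT : (PowerSeries.map ρ.toRingHom).mapMatrix (T n m) = N (e (T m n)) :=
    Matrix.ext fun i j => hρ i j
  have hρωT : (PowerSeries.map (ρ.comp ω).toRingHom).mapMatrix (T n m)
      = N ((PowerSeries.map ρ.toRingHom).mapMatrix (T' n m)) :=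
    Matrix.ext fun i j => by
      rw [AlgHom.toRingHom_eq_coe, AlgHom.comp_toRingHom, PowerSeries.map_comp]
      exact (congrArg _ (hω i j)).trans (map_negu _ _)
  calc (PowerSeries.map (ρ.comp ω).toRingHom).mapMatrix (T n m)
      = N (Ring.inverse (N (e (T m n)))) := by
        rw [hρωT, T', map_ringInverse _ h₁, hρT]
    _ = e (Ring.inverse (T m n)) := by
        rw [← map_ringInverse N (h₂.map e), hNN, map_ringInverse e h₂]
    _ = _ := rfl

/-- For `m+1 ≤ i ≤ m+n-1`, the isomorphism
`ρ_{n|m} ∘ ω_{n|m} : Y(gl_{n|m}) → Y(gl_{m|n})` satisfies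
`(ρ_{n|m} ∘ ω_{n|m})(f_{m+n-i}(v)) = -e_i(v)` and
`(ρ_{n|m} ∘ ω_{n|m})(e_{m+n-i}(v)) = -f_i(v)` (the `e`, `f` on the left coming from the
Gauss decomposition of `Y(gl_{n|m})`, those on the right from `Y(gl_{m|n})`;
`1`-based labels, so the `0`-based matrix entries are shifted by one). -/
theorem rho_omega_maps_f_to_e (m n : ℕ)
    (ω : Yangian n m →ₐ[ℂ] Yangian n m) (hω : omegaProp n m ω)
    (ρ : Yangian n m →ₐ[ℂ] Yangian m n) (hρ : rhoProp n m ρ)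
    (F₁ D₁ E₁ : Matrix (Fin (n+m)) (Fin (n+m)) (PowerSeries (Yangian n m)))
    (hG₁ : IsGauss n m F₁ D₁ E₁)
    (F₂ D₂ E₂ : Matrix (Fin (m+n)) (Fin (m+n)) (PowerSeries (Yangian m n)))
    (hG₂ : IsGauss m n F₂ D₂ E₂)
    (i : ℕ) (hi1 : m + 1 ≤ i) (hi2 : i ≤ m + n - 1) :
    PowerSeries.map (ρ.comp ω).toRingHom
        (F₁ ⟨m+n-i, by omega⟩ ⟨m+n-i-1, by omega⟩)
      = -E₂ ⟨i-1, by omega⟩ ⟨i, by omega⟩ ∧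
    PowerSeries.map (ρ.comp ω).toRingHom
        (E₁ ⟨m+n-i-1, by omega⟩ ⟨m+n-i, by omega⟩)
      = -F₂ ⟨i, by omega⟩ ⟨i-1, by omega⟩ := by
  have hLDU₁ := hG₁.isLDU
  have hLDU₂ := hG₂.isLDU
  obtain ⟨-, -, -, -, -, -, hT₁⟩ := hG₁
  obtain ⟨-, -, -, -, -, -, hT₂⟩ := hG₂
  set Φ := (PowerSeries.map (ρ.comp ω).toRingHom).mapMatrix (m := Fin (n+m))
  set e := flipEquiv n m
  have hΦ : Φ F₁ * Φ D₁ * Φ E₁ = (Ring.inverse E₂).submatrix e e *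
      (Ring.inverse D₂).submatrix e e * (Ring.inverse F₂).submatrix e e := by
    rw [← map_mul, ← map_mul, ← hT₁,
      mapMatrix_rho_comp_omega_T hω hρ (hT₁ ▸ hLDU₁.isUnit_mul) (hT₂ ▸ hLDU₂.isUnit_mul), hT₂,
      hLDU₂.ringInverse_mul, Matrix.submatrix_mul_equiv, Matrix.submatrix_mul_equiv]
  obtain ⟨hF, hE⟩ :=
    (hLDU₁.map _).unique (hLDU₂.ringInverse_submatrix (strictAnti_flipEquiv n m)) hΦ
  have he₁ : e ⟨m+n-i, by omega⟩ = ⟨i-1, by omega⟩ :=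
    Fin.ext (by rw [val_flipEquiv]; dsimp only; omega)
  have he₂ : e ⟨m+n-i-1, by omega⟩ = ⟨i, by omega⟩ :=
    Fin.ext (by rw [val_flipEquiv]; dsimp only; omega)
  have hcov : (⟨i-1, by omega⟩ : Fin (m+n)) ⋖ ⟨i, by omega⟩ := by
    rw [Fin.covBy_iff, Nat.covBy_iff_add_one_eq]
    dsimp only
    omega
  constructor
  · calc _ = Ring.inverse E₂ (e ⟨m+n-i, _⟩) (e ⟨m+n-i-1, _⟩) := congrFun₂ hF _ _
      _ = _ := by
        rw [he₁, he₂, hLDU₂.upper.ringInverse_apply_of_covBy Function.injective_id hcov]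
  · calc _ = Ring.inverse F₂ (e ⟨m+n-i-1, _⟩) (e ⟨m+n-i, _⟩) := congrFun₂ hE _ _
      _ = _ := by
        rw [he₁, he₂, hLDU₂.lower.ringInverse_apply_of_covBy OrderDual.toDual.injective
          (toDual_covBy_toDual_iff.2 hcov)]

end SuperYangian
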